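/- Let k : [0,1] → ℝ be continuous with k > 0 on (0,1], k(0) = 0, and suppose x·k'(x) ≤ M·k(x) on (0,1] with M ∈ (0,2). Then there exists C > 0 such that for every u ∈ H⁰¹(0,1) (i.e. u ∈ H¹(0,1) with u(0) = u(1) = 0), one has ∫₀¹ u(x)²/k(x) dx ≤ C ∫₀¹ u'(x)² dx. -/

import Mathlib

open Set MeasureTheory intervalIntegral

/-!
The differential inequality `x k' ≤ M k` makes `k(x) x^(-M)` nonincreasing, so
`k(x) ≥ k(1) x^M` on `(0, 1]`. By the fundamental theorem of calculus and Cauchy–Schwarz,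
`u(x)² ≤ x ∫₀¹ u'²`. Hence `u²/k ≤ (∫₀¹ u'² / k(1)) x^(1-M)`, which is integrable because
`M < 2`, with `∫₀¹ x^(1-M) = 1/(2-M)`.
-/

theorem sq_intervalIntegral_le_mul_intervalIntegral_sq {f : ℝ → ℝ} {a b : ℝ} (hab : a ≤ b)
    (hf : IntervalIntegrable f volume a b)
    (hf2 : IntervalIntegrable (fun t => f t ^ 2) volume a b) :
    (∫ t in a..b, f t) ^ 2 ≤ (b - a) * ∫ t in a..b, f t ^ 2 := by
  rcases hab.eq_or_lt with rfl | hab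
  · simp
  have hvol : volume.real (Ioc a b) = b - a := by simp [hab.le]
  have jensen := (even_two.convexOn_pow (𝕜 := ℝ)).map_set_average_le (continuousOn_pow 2)
    isClosed_univ (by simp [hab]) (by simp) (by simp) hf.1 hf2.1
  simp only [setAverage_eq, hvol, smul_eq_mul, ← intervalIntegral.integral_of_le hab.le] at jensen
  rw [mul_pow, inv_pow, inv_mul_le_iff₀ (by positivity)] at jensen
  refine jensen.trans_eq ?_
  field_simp

theorem integrableOn_Icc_of_hasDerivAt_of_integrableOn_sq {u u' : ℝ → ℝ} {a b : ℝ}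
    (hu : ∀ x ∈ Icc a b, HasDerivAt u (u' x) x)
    (hu' : IntegrableOn (fun x => u' x ^ 2) (Icc a b)) :
    IntegrableOn u' (Icc a b) := by
  have hmeas : AEStronglyMeasurable u' (volume.restrict (Icc a b)) :=
    (measurable_deriv u).aestronglyMeasurable.congr
      (ae_restrict_of_forall_mem measurableSet_Icc fun x hx => (hu x hx).deriv)
  exact ((memLp_two_iff_integrable_sq hmeas).2 hu').integrable one_le_two

theorem sq_sub_le_mul_intervalIntegral_sq_deriv {u u' : ℝ → ℝ} {a b x : ℝ}
    (hu : ∀ x ∈ Icc a b, HasDerivAt u (u' x) x)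
    (hu' : IntegrableOn (fun x => u' x ^ 2) (Icc a b)) (hx : x ∈ Icc a b) :
    (u x - u a) ^ 2 ≤ (x - a) * ∫ t in a..b, u' t ^ 2 := by
  have hsub : Icc a x ⊆ Icc a b := Icc_subset_Icc_right hx.2
  have hint : IntervalIntegrable u' volume a x := (intervalIntegrable_iff_integrableOn_Icc_of_le
    hx.1).2 <| (integrableOn_Icc_of_hasDerivAt_of_integrableOn_sq hu hu').mono_set hsub
  have hint2 : IntervalIntegrable (fun t => u' t ^ 2) volume a x :=
    (intervalIntegrable_iff_integrableOn_Icc_of_le hx.1).2 (hu'.mono_set hsub)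
  have hftc : ∫ t in a..x, u' t = u x - u a :=
    integral_eq_sub_of_hasDerivAt (fun t ht => hu t (hsub (uIcc_of_le hx.1 ▸ ht))) hint
  calc (u x - u a) ^ 2 = (∫ t in a..x, u' t) ^ 2 := by rw [hftc]
    _ ≤ (x - a) * ∫ t in a..x, u' t ^ 2 :=
      sq_intervalIntegral_le_mul_intervalIntegral_sq hx.1 hint hint2
    _ ≤ (x - a) * ∫ t in a..b, u' t ^ 2 := by
      gcongr
      · exact sub_nonneg.2 hx.1
      · exact integral_mono_interval le_rfl hx.1 hx.2 (.of_forall fun t => sq_nonneg _)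
          ((intervalIntegrable_iff_integrableOn_Icc_of_le (hx.1.trans hx.2)).2 hu')

theorem antitoneOn_mul_rpow_neg_of_mul_deriv_le {k k' : ℝ → ℝ} {M b : ℝ}
    (hder : ∀ x ∈ Ioc 0 b, HasDerivAt k (k' x) x)
    (hineq : ∀ x ∈ Ioc 0 b, x * k' x ≤ M * k x) :
    AntitoneOn (fun x => k x * x ^ (-M)) (Ioc 0 b) := by
  have hderiv : ∀ x ∈ Ioc 0 b, HasDerivAt (fun x => k x * x ^ (-M))
      (x ^ (-M - 1) * (x * k' x - M * k x)) x := by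
    intro x hx
    refine ((hder x hx).mul (Real.hasDerivAt_rpow_const (Or.inl hx.1.ne'))).congr_deriv ?_
    rw [show -M = 1 + (-M - 1) by ring, Real.rpow_add hx.1, Real.rpow_one]
    ring_nf
  refine antitoneOn_of_deriv_nonpos (convex_Ioc 0 b)
    (fun x hx => (hderiv x hx).continuousAt.continuousWithinAt) ?_ ?_ <;> rw [interior_Ioc]
  · exact fun x hx => (hderiv x (Ioo_subset_Ioc_self hx)).differentiableAt.differentiableWithinAt
  · intro x hx
    rw [(hderiv x (Ioo_subset_Ioc_self hx)).deriv]
    exact mul_nonpos_of_nonneg_of_nonpos (Real.rpow_nonneg hx.1.le _)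
      (sub_nonpos.2 (hineq x (Ioo_subset_Ioc_self hx)))

theorem mul_rpow_le_of_mul_deriv_le {k k' : ℝ → ℝ} {M b x : ℝ}
    (hder : ∀ x ∈ Ioc 0 b, HasDerivAt k (k' x) x)
    (hineq : ∀ x ∈ Ioc 0 b, x * k' x ≤ M * k x) (hx : x ∈ Ioc 0 b) :
    k b * x ^ M ≤ k x * b ^ M := by
  have hb : 0 < b := hx.1.trans_le hx.2
  have h := antitoneOn_mul_rpow_neg_of_mul_deriv_le hder hineq hx ⟨hb, le_rfl⟩ hx.2
  simp only [Real.rpow_neg hx.1.le, Real.rpow_neg hb.le] at h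
  have := Real.rpow_pos_of_pos hx.1 M
  have := Real.rpow_pos_of_pos hb M
  rwa [← div_eq_mul_inv, ← div_eq_mul_inv, div_le_div_iff₀ (by positivity) (by positivity)] at h

theorem intervalIntegral_le_of_abs_le_mul_rpow {f : ℝ → ℝ} {A r : ℝ} (hr : -1 < r)
    (hf : ContinuousOn f (Ioc 0 1)) (hle : ∀ x ∈ Ioc (0 : ℝ) 1, |f x| ≤ A * x ^ r) :
    ∫ x in (0 : ℝ)..1, f x ≤ A / (r + 1) := by
  have hg : IntervalIntegrable (fun x : ℝ => A * x ^ r) volume 0 1 :=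
    (intervalIntegral.intervalIntegrable_rpow' hr).const_mul A
  have hfi : IntervalIntegrable f volume 0 1 := by
    refine hg.mono_fun' ?_ ?_
    · rw [uIoc_of_le zero_le_one]; exact hf.aestronglyMeasurable measurableSet_Ioc
    · rw [uIoc_of_le zero_le_one]
      exact ae_restrict_of_forall_mem measurableSet_Ioc hle
  calc ∫ x in (0 : ℝ)..1, f x ≤ ∫ x in (0 : ℝ)..1, A * x ^ r :=
        integral_mono_on_of_le_Ioo zero_le_one hfi hg
          fun x hx => (le_abs_self _).trans (hle x (Ioo_subset_Ioc_self hx))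
    _ = A / (r + 1) := by
        rw [intervalIntegral.integral_const_mul, integral_rpow (Or.inl hr), Real.one_rpow,
          Real.zero_rpow (by linarith)]
        ring

theorem stmt_8_general (k k' : ℝ → ℝ) (M : ℝ) (hM : M ∈ Set.Ioo (0:ℝ) 2)
    (hpos : ∀ x ∈ Set.Ioc (0:ℝ) 1, 0 < k x)
    (hder : ∀ x ∈ Set.Ioc (0:ℝ) 1, HasDerivAt k (k' x) x)
    (hineq : ∀ x ∈ Set.Ioc (0:ℝ) 1, x * k' x ≤ M * k x) :
    ∃ C > 0, ∀ u u' : ℝ → ℝ,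
      (∀ x ∈ Set.Icc (0:ℝ) 1, HasDerivAt u (u' x) x) →
      u 0 = 0 → u 1 = 0 →
      MeasureTheory.IntegrableOn (fun x => u' x ^ 2) (Set.Icc 0 1)
        MeasureTheory.volume →
      (∫ x in (0:ℝ)..1, u x ^ 2 / k x) ≤ C * ∫ x in (0:ℝ)..1, u' x ^ 2 := by
  have hk1 : 0 < k 1 := hpos 1 ⟨one_pos, le_rfl⟩
  have hM2 : 0 < 2 - M := sub_pos.2 hM.2
  refine ⟨1 / (k 1 * (2 - M)), by positivity, fun u u' hu hu0 _ hu' => ?_⟩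
  set I := ∫ x in (0:ℝ)..1, u' x ^ 2
  have hI : 0 ≤ I := integral_nonneg zero_le_one fun _ _ => sq_nonneg _
  have hcont : ContinuousOn (fun x => u x ^ 2 / k x) (Ioc 0 1) :=
    fun x hx => (((hu x (Ioc_subset_Icc_self hx)).continuousAt.pow 2).div
      (hder x hx).continuousAt (hpos x hx).ne').continuousWithinAt
  have hbound : ∀ x ∈ Ioc (0:ℝ) 1, |u x ^ 2 / k x| ≤ I / k 1 * x ^ (1 - M) := by
    intro x hx
    have hxM : 0 < x ^ M := Real.rpow_pos_of_pos hx.1 M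
    have hkx := mul_rpow_le_of_mul_deriv_le hder hineq hx
    have hux := sq_sub_le_mul_intervalIntegral_sq_deriv hu hu' (Ioc_subset_Icc_self hx)
    rw [Real.one_rpow, mul_one] at hkx
    rw [hu0, sub_zero, sub_zero] at hux
    rw [abs_of_nonneg (div_nonneg (sq_nonneg _) (hpos x hx).le), div_le_iff₀ (hpos x hx)]
    calc u x ^ 2 ≤ x * I := hux
      _ = I / k 1 * x ^ (1 - M) * (k 1 * x ^ M) := by
        rw [Real.rpow_sub hx.1, Real.rpow_one]; field_simp
      _ ≤ I / k 1 * x ^ (1 - M) * k x := by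
        gcongr
        exact mul_nonneg (div_nonneg hI hk1.le) (Real.rpow_nonneg hx.1.le _)
  calc (∫ x in (0:ℝ)..1, u x ^ 2 / k x) ≤ I / k 1 / (1 - M + 1) :=
        intervalIntegral_le_of_abs_le_mul_rpow (by linarith [hM.2]) hcont hbound
    _ = 1 / (k 1 * (2 - M)) * I := by rw [show 1 - M + 1 = 2 - M by ring]; field_simp

/-- Hardy–Poincaré inequality: ∫₀¹ u²/k ≤ C ∫₀¹ (u')² for u vanishing at 0 and 1,
when k is degenerate at 0 with exponent M < 2. -/
theorem stmt_8 (k k' : ℝ → ℝ) (M : ℝ) (hM : M ∈ Set.Ioo (0:ℝ) 2)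
    (hcont : ContinuousOn k (Set.Icc 0 1))
    (hpos : ∀ x ∈ Set.Ioc (0:ℝ) 1, 0 < k x)
    (hk0 : k 0 = 0)
    (hder : ∀ x ∈ Set.Ioc (0:ℝ) 1, HasDerivAt k (k' x) x)
    (hineq : ∀ x ∈ Set.Ioc (0:ℝ) 1, x * k' x ≤ M * k x) :
    ∃ C > 0, ∀ u u' : ℝ → ℝ,
      (∀ x ∈ Set.Icc (0:ℝ) 1, HasDerivAt u (u' x) x) →
      u 0 = 0 → u 1 = 0 →
      MeasureTheory.IntegrableOn (fun x => u' x ^ 2) (Set.Icc 0 1)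
        MeasureTheory.volume →
      (∫ x in (0:ℝ)..1, u x ^ 2 / k x) ≤ C * ∫ x in (0:ℝ)..1, u' x ^ 2 :=
  stmt_8_general k k' M hM hpos hder hineq
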